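/- Let (B, ψ, A) be a d-regular real quantum graph on a quantum set with δ-form ψ. Then 0 ≤ d ≤ δ². Furthermore d = 0 if and only if A = 0, and d = δ² if and only if A = δ²·ψ(·)·1_B (the reflexive complete graph). -/

import Mathlib

open TensorProduct
open scoped ComplexConjugate

/-- Linear extension of `x ⊗ y ↦ ψ(b·x)·ψ(c·y)` (GNS pairing on the tensor square). -/
noncomputable def pairQ (B : Type*) [Ring B] [Algebra ℂ B]
    (ψ : B →ₗ[ℂ] ℂ) (b c : B) : TensorProduct ℂ B B →ₗ[ℂ] ℂ :=
  TensorProduct.lift ((LinearMap.mul ℂ ℂ).compl₁₂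
    (ψ ∘ₗ LinearMap.mulLeft ℂ b) (ψ ∘ₗ LinearMap.mulLeft ℂ c))

lemma pairQ_tmul (B : Type*) [Ring B] [Algebra ℂ B]
    (ψ : B →ₗ[ℂ] ℂ) (b c x y : B) :
    pairQ B ψ b c (x ⊗ₜ[ℂ] y) = ψ (b * x) * ψ (c * y) := by
  simp [pairQ, TensorProduct.lift.tmul, LinearMap.compl₁₂_apply, LinearMap.mul_apply',
    LinearMap.mulLeft_apply, LinearMap.comp_apply]

lemma exists_gns_onb {V : Type*} [AddCommGroup V] [Module ℂ V] [FiniteDimensional ℂ V]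
    (f : V → V → ℂ)
    (haddr : ∀ x y z : V, f x (y + z) = f x y + f x z)
    (hsmulr : ∀ (a : ℂ) (x y : V), f x (a • y) = a * f x y)
    (hconj : ∀ x y : V, f y x = conj (f x y))
    (hpos : ∀ x : V, 0 ≤ (f x x).re)
    (hdef : ∀ x : V, f x x = 0 → x = 0) :
    ∃ e : Fin (Module.finrank ℂ V) → V,
      (∀ i j, f (e i) (e j) = if i = j then 1 else 0) ∧
      (∀ x : V, x = ∑ i, f (e i) x • e i) := by
  letI c : InnerProductSpace.Core ℂ V :=
    { inner := f
      conj_inner_symm := fun x y => (hconj y x).symm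
      re_inner_nonneg := hpos
      add_left := fun x y z => by
        show f (x + y) z = f x z + f y z
        rw [hconj z (x + y), haddr, map_add, ← hconj z x, ← hconj z y]
      smul_left := fun x y r => by
        show f (r • x) y = conj r * f x y
        rw [hconj y (r • x), hsmulr, map_mul, ← hconj y x]
      definite := hdef }
  letI : NormedAddCommGroup V := c.toNormedAddCommGroup
  letI : InnerProductSpace ℂ V := InnerProductSpace.ofCore c.toCore
  obtain b := stdOrthonormalBasis ℂ V
  refine ⟨b, ?_, ?_⟩
  · intro i j
    have := orthonormal_iff_ite.1 b.orthonormal i j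
    exact this
  · intro x
    exact (b.sum_repr' x).symm

lemma psi_herm {B : Type*} [Ring B] [StarRing B] [Algebra ℂ B] [StarModule ℂ B]
    (ψ : B →ₗ[ℂ] ℂ)
    (hψpos : ∀ x : B, 0 ≤ (ψ (star x * x)).re ∧ (ψ (star x * x)).im = 0) :
    ∀ x y : B, ψ (star y * x) = conj (ψ (star x * y)) := by
  intro x y
  have h1 := (hψpos (x + y)).2
  have h2 := (hψpos (x + Complex.I • y)).2
  have hx := (hψpos x).2
  have hy := (hψpos y).2
  have e1 : ψ (star (x + y) * (x + y))
      = ψ (star x * x) + (ψ (star x * y) + ψ (star y * x)) + ψ (star y * y) := by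
    rw [star_add, add_mul, mul_add, mul_add]
    simp only [map_add]
    ring
  have e2 : ψ (star (x + Complex.I • y) * (x + Complex.I • y))
      = ψ (star x * x) + (Complex.I * ψ (star x * y) - Complex.I * ψ (star y * x))
        + ψ (star y * y) := by
    rw [star_add, star_smul, add_mul, mul_add, mul_add]
    simp only [map_add, smul_mul_assoc, mul_smul_comm, map_smul, smul_eq_mul,
      Complex.star_def, Complex.conj_I, neg_smul, neg_mul, map_neg]
    ring_nf
    simp [Complex.I_sq]
  rw [e1] at h1
  rw [e2] at h2
  simp only [Complex.add_im, Complex.sub_im, Complex.mul_im, Complex.I_re, Complex.I_im,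
    hx, hy, zero_add, add_zero, zero_mul, one_mul] at h1 h2
  apply Complex.ext
  · simp only [Complex.conj_re]; linarith
  · simp only [Complex.conj_im]; linarith

/-- Shared basis infrastructure: a GNS-orthonormal basis together with the expansion
of `mdag` in that basis. -/
lemma qg_basis
    (B : Type*) [NormedRing B] [StarRing B] [CStarRing B] [NormedAlgebra ℂ B]
    [StarModule ℂ B] [FiniteDimensional ℂ B]
    (ψ : B →ₗ[ℂ] ℂ)
    (hψ1 : ψ 1 = 1)
    (hψpos : ∀ x : B, 0 ≤ (ψ (star x * x)).re ∧ (ψ (star x * x)).im = 0)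
    (hψfaith : ∀ x : B, ψ (star x * x) = 0 → x = 0)
    (mdag : B →ₗ[ℂ] TensorProduct ℂ B B)
    (hmdag : ∀ a b c : B, pairQ B ψ (star b) (star c) (mdag a) = ψ (star (b * c) * a)) :
    ∃ e : Fin (Module.finrank ℂ B) → B,
      (∀ i j, ψ (star (e i) * e j) = if i = j then 1 else 0) ∧
      (∀ x : B, x = ∑ i, ψ (star (e i) * x) • e i) ∧
      (∀ x : B, mdag x = ∑ p, ∑ q, ψ (star (e p * e q) * x) • (e p ⊗ₜ[ℂ] e q)) := by
  have hherm := psi_herm ψ hψpos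
  obtain ⟨e, honb, hexp⟩ := exists_gns_onb (fun x y => ψ (star x * y))
    (fun x y z => by rw [mul_add, map_add])
    (fun a x y => by rw [mul_smul_comm, map_smul, smul_eq_mul])
    (fun x y => hherm x y)
    (fun x => (hψpos x).1)
    hψfaith
  have hnt : Nontrivial B := by
    refine ⟨1, 0, fun h => ?_⟩
    rw [h, map_zero] at hψ1
    exact one_ne_zero hψ1.symm
  have hpos : 0 < Module.finrank ℂ B := Module.finrank_pos
  haveI : Nonempty (Fin (Module.finrank ℂ B)) := ⟨⟨0, hpos⟩⟩
  -- linear independence of e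
  have li : LinearIndependent ℂ e := by
    rw [Fintype.linearIndependent_iff]
    intro g hg j
    have := congrArg (fun v => ψ (star (e j) * v)) hg
    simp only [Finset.mul_sum, map_sum, mul_smul_comm, map_smul, smul_eq_mul, map_zero] at this
    rw [Finset.sum_congr rfl (fun i _ => by rw [honb j i])] at this
    simpa using this
  let bB : Module.Basis (Fin (Module.finrank ℂ B)) ℂ B :=
    basisOfLinearIndependentOfCardEqFinrank li (by simp)
  have hbB : ∀ i, bB i = e i := fun i => by
    simp [bB, coe_basisOfLinearIndependentOfCardEqFinrank]
  -- expansion of any tensor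
  have Texp : ∀ u : TensorProduct ℂ B B,
      u = ∑ p, ∑ q, pairQ B ψ (star (e p)) (star (e q)) u • (e p ⊗ₜ[ℂ] e q) := by
    intro u
    let T := bB.tensorProduct bB
    have hu := T.sum_repr u
    have hT : ∀ ij : Fin (Module.finrank ℂ B) × Fin (Module.finrank ℂ B),
        T ij = e ij.1 ⊗ₜ[ℂ] e ij.2 := by
      intro ij
      simp [T, Module.Basis.tensorProduct_apply', hbB]
    have hcoef : ∀ p q, pairQ B ψ (star (e p)) (star (e q)) u = T.repr u (p, q) := by
      intro p q
      conv_lhs => rw [← hu]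
      rw [map_sum]
      have : ∀ ij : Fin (Module.finrank ℂ B) × Fin (Module.finrank ℂ B),
          pairQ B ψ (star (e p)) (star (e q)) (T.repr u ij • T ij)
            = T.repr u ij * ((if p = ij.1 then 1 else 0) * if q = ij.2 then 1 else 0) := by
        intro ij
        rw [map_smul, hT ij, pairQ_tmul, honb p ij.1, honb q ij.2, smul_eq_mul]
      rw [Finset.sum_congr rfl (fun ij _ => this ij)]
      rw [Finset.sum_eq_single (p, q)]
      · simp
      · intro ij _ hij
        by_cases h1 : p = ij.1
        · have h2 : ¬ q = ij.2 := fun h2 => hij (Prod.ext_iff.mpr ⟨h1.symm, h2.symm⟩)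
          simp [h2]
        · simp [h1]
      · intro h
        exact absurd (Finset.mem_univ _) h
    conv_lhs => rw [← hu]
    rw [← Fintype.sum_prod_type']
    refine Finset.sum_congr rfl fun ij _ => ?_
    rw [hcoef ij.1 ij.2, hT ij]
  refine ⟨e, honb, hexp, fun x => ?_⟩
  conv_lhs => rw [Texp (mdag x)]
  refine Finset.sum_congr rfl fun p _ => Finset.sum_congr rfl fun q _ => ?_
  rw [hmdag x (e p) (e q)]
lemma qg_deg_nonneg
    (B : Type*) [NormedRing B] [StarRing B] [CStarRing B] [NormedAlgebra ℂ B]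
    [StarModule ℂ B] [FiniteDimensional ℂ B]
    (ψ : B →ₗ[ℂ] ℂ)
    (hψ1 : ψ 1 = 1)
    (hψpos : ∀ x : B, 0 ≤ (ψ (star x * x)).re ∧ (ψ (star x * x)).im = 0)
    (hψfaith : ∀ x : B, ψ (star x * x) = 0 → x = 0)
    (δ : ℝ) (hδ : 0 < δ)
    (mdag : B →ₗ[ℂ] TensorProduct ℂ B B)
    (hmdag : ∀ a b c : B, pairQ B ψ (star b) (star c) (mdag a) = ψ (star (b * c) * a))
    (A : B →ₗ[ℂ] B)
    (hSchur : ((δ : ℂ) ^ 2) • A = LinearMap.mul' ℂ B ∘ₗ TensorProduct.map A A ∘ₗ mdag)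
    (hreal : ∀ x : B, A (star x) = star (A x))
    (d : ℝ)
    (hreg1 : A 1 = (d : ℂ) • 1) :
    0 ≤ d ∧ (d = 0 → ∀ x : B, A x = 0) := by
  have hherm := psi_herm ψ hψpos
  obtain ⟨e, honb, hexp, hEta⟩ := qg_basis B ψ hψ1 hψpos hψfaith mdag hmdag
  have hconjψ : ∀ z : B, conj (ψ (star z)) = ψ z := by
    intro z
    have := hherm z 1
    rw [star_one, mul_one, one_mul] at this
    rw [← this]
  set Mf : Fin (Module.finrank ℂ B) → Fin (Module.finrank ℂ B) → ℂ :=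
    fun p j => ∑ q, ψ (star (e p * e q)) * ψ (star (e j) * A (e q)) with hMf
  have hstar : ∀ p, (∑ q, ψ (e p * e q) • star (e q)) = e p := by
    intro p
    have h := hexp (star (e p))
    have h2 := congrArg star h
    rw [star_star, star_sum] at h2
    conv_rhs => rw [h2]
    refine Finset.sum_congr rfl fun q _ => ?_
    rw [star_smul, Complex.star_def, hherm (star (e p)) (e q), Complex.conj_conj,
      star_star]
  have H1 : ∀ p j, conj (Mf p j) = ψ (A (e p) * e j) := by
    intro p j
    rw [hMf]
    simp only [map_sum, map_mul]
    have step : ∀ q, conj (ψ (star (e p * e q))) * conj (ψ (star (e j) * A (e q)))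
        = ψ (e p * e q) * ψ (A (star (e q)) * e j) := by
      intro q
      rw [hconjψ (e p * e q)]
      congr 1
      rw [hherm (A (e q)) (e j), Complex.conj_conj, ← hreal]
    rw [Finset.sum_congr rfl fun q _ => step q]
    have : ∑ q, ψ (e p * e q) * ψ (A (star (e q)) * e j)
        = ψ (A (∑ q, ψ (e p * e q) • star (e q)) * e j) := by
      rw [map_sum, Finset.sum_mul, map_sum]
      refine Finset.sum_congr rfl fun q _ => ?_
      rw [map_smul, smul_mul_assoc, map_smul, smul_eq_mul]
    rw [this, hstar p]
  have Key : ((δ : ℂ) ^ 2) * d = ∑ p, ∑ j, conj (Mf p j) * Mf p j := by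
    have hS1 := LinearMap.congr_fun hSchur 1
    simp only [LinearMap.smul_apply, LinearMap.comp_apply] at hS1
    rw [hEta 1] at hS1
    simp only [mul_one, map_sum, map_smul, TensorProduct.map_tmul,
      LinearMap.mul'_apply] at hS1
    have hS2 := congrArg ψ hS1
    simp only [map_sum, map_smul, smul_eq_mul, hreg1, hψ1, mul_one] at hS2
    rw [hS2]
    have hAA : ∀ p q, ψ (A (e p) * A (e q))
        = ∑ j, ψ (star (e j) * A (e q)) * ψ (A (e p) * e j) := by
      intro p q
      have h := hexp (A (e q))
      calc ψ (A (e p) * A (e q))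
          = ψ (A (e p) * ∑ j, ψ (star (e j) * A (e q)) • e j) := by
            conv_lhs => rw [h]
        _ = ∑ j, ψ (star (e j) * A (e q)) * ψ (A (e p) * e j) := by
            rw [Finset.mul_sum, map_sum]
            refine Finset.sum_congr rfl fun j _ => ?_
            rw [mul_smul_comm, map_smul, smul_eq_mul]
    refine Finset.sum_congr rfl fun p _ => ?_
    rw [Finset.sum_congr rfl fun q _ => by rw [hAA p q]]
    simp only [Finset.mul_sum]
    rw [Finset.sum_comm]
    refine Finset.sum_congr rfl fun j _ => ?_
    rw [H1 p j, hMf]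
    simp only [Finset.mul_sum]
    refine Finset.sum_congr rfl fun q _ => by ring
  have hre : (δ ^ 2 * d : ℝ) = ∑ p, ∑ j, Complex.normSq (Mf p j) := by
    have KL : (((δ ^ 2 * d : ℝ)) : ℂ)
        = ((∑ p, ∑ j, Complex.normSq (Mf p j) : ℝ) : ℂ) := by
      push_cast
      rw [Key]
      refine Finset.sum_congr rfl fun p _ => Finset.sum_congr rfl fun j _ => ?_
      rw [mul_comm, Complex.mul_conj]
    exact_mod_cast KL
  have hnn : (0:ℝ) ≤ ∑ p, ∑ j, Complex.normSq (Mf p j) :=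
    Finset.sum_nonneg fun p _ => Finset.sum_nonneg fun j _ => Complex.normSq_nonneg _
  have hδ2 : (0:ℝ) < δ ^ 2 := by positivity
  constructor
  · nlinarith [hre, hnn]
  · intro hd x
    have hzero : ∑ p, ∑ j, Complex.normSq (Mf p j) = 0 := by
      rw [← hre, hd]; ring
    have hz : ∀ p j, Mf p j = 0 := by
      intro p j
      have hp := (Finset.sum_eq_zero_iff_of_nonneg
        (fun p _ => Finset.sum_nonneg fun j _ => Complex.normSq_nonneg _)).1 hzero p
        (Finset.mem_univ p)
      have hj := (Finset.sum_eq_zero_iff_of_nonneg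
        (fun j _ => Complex.normSq_nonneg _)).1 hp j (Finset.mem_univ j)
      exact Complex.normSq_eq_zero.1 hj
    have hAe : ∀ p j, ψ (A (e p) * e j) = 0 := fun p j => by
      rw [← H1 p j, hz p j, map_zero]
    have hAxy : ∀ x y : B, ψ (A x * y) = 0 := by
      intro x y
      rw [hexp x, hexp y]
      simp only [map_sum, map_smul, Finset.sum_mul, smul_mul_assoc, Finset.mul_sum,
        mul_smul_comm, smul_eq_mul]
      simp [hAe]
    have h0 : star (A x) = 0 := by
      have hf := hψfaith (star (A x))
      rw [star_star] at hf
      exact hf (hAxy x (star (A x)))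
    calc A x = star (star (A x)) := (star_star _).symm
      _ = 0 := by rw [h0, star_zero]
lemma qg_compl_schur
    (B : Type*) [NormedRing B] [StarRing B] [CStarRing B] [NormedAlgebra ℂ B]
    [StarModule ℂ B] [FiniteDimensional ℂ B]
    (ψ : B →ₗ[ℂ] ℂ)
    (hψ1 : ψ 1 = 1)
    (hψpos : ∀ x : B, 0 ≤ (ψ (star x * x)).re ∧ (ψ (star x * x)).im = 0)
    (hψfaith : ∀ x : B, ψ (star x * x) = 0 → x = 0)
    (δ : ℝ)
    (mdag : B →ₗ[ℂ] TensorProduct ℂ B B)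
    (hmdag : ∀ a b c : B, pairQ B ψ (star b) (star c) (mdag a) = ψ (star (b * c) * a))
    (A : B →ₗ[ℂ] B)
    (hSchur : ((δ : ℂ) ^ 2) • A = LinearMap.mul' ℂ B ∘ₗ TensorProduct.map A A ∘ₗ mdag) :
    ((δ : ℂ) ^ 2) • (((δ : ℂ) ^ 2) • ψ.smulRight (1 : B) - A)
      = LinearMap.mul' ℂ B
        ∘ₗ TensorProduct.map (((δ : ℂ) ^ 2) • ψ.smulRight (1 : B) - A)
            (((δ : ℂ) ^ 2) • ψ.smulRight (1 : B) - A) ∘ₗ mdag := by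
  have hherm := psi_herm ψ hψpos
  obtain ⟨e, honb, hexp, hEta⟩ := qg_basis B ψ hψ1 hψpos hψfaith mdag hmdag
  have hconjψ : ∀ z : B, conj (ψ (star z)) = ψ z := by
    intro z
    have := hherm z 1
    rw [star_one, mul_one, one_mul] at this
    rw [← this]
  have hone : (∑ p, ψ (e p) • star (e p)) = (1 : B) := by
    have h := hexp (1 : B)
    have h2 := congrArg star h
    rw [star_one, star_sum] at h2
    conv_rhs => rw [h2]
    refine Finset.sum_congr rfl fun p _ => ?_
    rw [mul_one, star_smul, Complex.star_def, hconjψ]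
  apply LinearMap.ext; intro x
  have k2 : ∀ q, ∑ p, ψ (star (e p * e q) * x) * ψ (e p) = ψ (star (e q) * x) := by
    intro q
    calc ∑ p, ψ (star (e p * e q) * x) * ψ (e p)
        = ψ ((star (e q) * (∑ p, ψ (e p) • star (e p))) * x) := by
          rw [Finset.mul_sum, Finset.sum_mul, map_sum]
          refine Finset.sum_congr rfl fun p _ => ?_
          rw [star_mul, mul_smul_comm, smul_mul_assoc, map_smul, smul_eq_mul, mul_comm]
      _ = ψ (star (e q) * x) := by rw [hone, mul_one]
  have k3 : ∀ p, ∑ q, ψ (star (e p * e q) * x) * ψ (e q) = ψ (star (e p) * x) := by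
    intro p
    calc ∑ q, ψ (star (e p * e q) * x) * ψ (e q)
        = ψ ((∑ q, ψ (e q) • star (e q)) * (star (e p) * x)) := by
          rw [Finset.sum_mul, map_sum]
          refine Finset.sum_congr rfl fun q _ => ?_
          rw [star_mul, mul_assoc, smul_mul_assoc, map_smul, smul_eq_mul, mul_comm]
      _ = ψ (star (e p) * x) := by rw [hone, one_mul]
  have v2 : ∑ p, ∑ q, (ψ (star (e p * e q) * x) * ψ (e p)) • A (e q) = A x := by
    rw [Finset.sum_comm]
    calc ∑ q, ∑ p, (ψ (star (e p * e q) * x) * ψ (e p)) • A (e q)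
        = ∑ q, ψ (star (e q) * x) • A (e q) := by
          refine Finset.sum_congr rfl fun q _ => ?_
          rw [← Finset.sum_smul, k2]
      _ = A (∑ q, ψ (star (e q) * x) • e q) := by
          rw [map_sum]
          exact Finset.sum_congr rfl fun q _ => (map_smul A _ _).symm
      _ = A x := by rw [← hexp x]
  have v3 : ∑ p, ∑ q, (ψ (star (e p * e q) * x) * ψ (e q)) • A (e p) = A x := by
    calc ∑ p, ∑ q, (ψ (star (e p * e q) * x) * ψ (e q)) • A (e p)
        = ∑ p, ψ (star (e p) * x) • A (e p) := by
          refine Finset.sum_congr rfl fun p _ => ?_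
          rw [← Finset.sum_smul, k3]
      _ = A (∑ p, ψ (star (e p) * x) • e p) := by
          rw [map_sum]
          exact Finset.sum_congr rfl fun p _ => (map_smul A _ _).symm
      _ = A x := by rw [← hexp x]
  have v1s : ∑ p, ∑ q, ψ (star (e p * e q) * x) * (ψ (e p) * ψ (e q)) = ψ x := by
    have hp : ∀ p, ∑ q, ψ (star (e p * e q) * x) * (ψ (e p) * ψ (e q))
        = ψ (star (e p) * x) * ψ (e p) := by
      intro p
      rw [← k3 p, Finset.sum_mul]
      refine Finset.sum_congr rfl fun q _ => by ring
    rw [Finset.sum_congr rfl fun p _ => hp p]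
    calc ∑ p, ψ (star (e p) * x) * ψ (e p)
        = ψ (∑ p, ψ (star (e p) * x) • e p) := by
          rw [map_sum]
          exact Finset.sum_congr rfl fun p _ => by rw [map_smul, smul_eq_mul]
      _ = ψ x := by rw [← hexp x]
  have v1 : ∑ p, ∑ q, (ψ (star (e p * e q) * x) * (ψ (e p) * ψ (e q))) • (1 : B)
      = ψ x • (1 : B) := by
    rw [← v1s, Finset.sum_smul]
    exact Finset.sum_congr rfl fun p _ => (Finset.sum_smul).symm
  have hS := LinearMap.congr_fun hSchur x
  simp only [LinearMap.comp_apply, LinearMap.smul_apply] at hS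
  rw [hEta x] at hS
  simp only [map_sum, map_smul, TensorProduct.map_tmul, LinearMap.mul'_apply] at hS
  simp only [LinearMap.comp_apply, LinearMap.smul_apply, LinearMap.sub_apply,
    LinearMap.smulRight_apply]
  rw [hEta x]
  simp only [map_sum, map_smul, TensorProduct.map_tmul, LinearMap.mul'_apply,
    LinearMap.sub_apply, LinearMap.smul_apply, LinearMap.smulRight_apply]
  have expand : ∀ p q : Fin (Module.finrank ℂ B),
      ψ (star (e p * e q) * x) •
        (((δ : ℂ) ^ 2 • (ψ (e p) • (1 : B)) - A (e p))
          * ((δ : ℂ) ^ 2 • (ψ (e q) • (1 : B)) - A (e q)))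
      = ((δ : ℂ) ^ 2 * (δ : ℂ) ^ 2) •
          ((ψ (star (e p * e q) * x) * (ψ (e p) * ψ (e q))) • (1 : B))
        - (δ : ℂ) ^ 2 • ((ψ (star (e p * e q) * x) * ψ (e p)) • A (e q))
        - (δ : ℂ) ^ 2 • ((ψ (star (e p * e q) * x) * ψ (e q)) • A (e p))
        + ψ (star (e p * e q) * x) • (A (e p) * A (e q)) := by
    intro p q
    simp only [sub_mul, mul_sub, smul_mul_assoc, mul_smul_comm, one_mul, mul_one,
      smul_sub, smul_smul]
    match_scalars <;> ring
  rw [Finset.sum_congr rfl fun p _ => Finset.sum_congr rfl fun q _ => expand p q]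
  simp only [Finset.sum_sub_distrib, Finset.sum_add_distrib, ← Finset.smul_sum]
  rw [v1, v2, v3, ← hS]
  match_scalars <;> ring
/-- For a `d`-regular real quantum graph `(B, ψ, A)` on a quantum
set with `δ`-form `ψ`:  `0 ≤ d ≤ δ²`; moreover `d = 0` iff `A = 0`, and `d = δ²` iff
`A = δ²·ψ(·)·1` (the reflexive complete quantum graph). -/
theorem degree_bounds
    (B : Type*) [NormedRing B] [StarRing B] [CStarRing B] [NormedAlgebra ℂ B]
    [StarModule ℂ B] [FiniteDimensional ℂ B]
    (ψ : B →ₗ[ℂ] ℂ)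
    (hψ1 : ψ 1 = 1)
    (hψpos : ∀ x : B, 0 ≤ (ψ (star x * x)).re ∧ (ψ (star x * x)).im = 0)
    (hψfaith : ∀ x : B, ψ (star x * x) = 0 → x = 0)
    (δ : ℝ) (hδ : 0 < δ)
    (mdag : B →ₗ[ℂ] TensorProduct ℂ B B)
    (hmdag : ∀ a b c : B, pairQ B ψ (star b) (star c) (mdag a) = ψ (star (b * c) * a))
    (hδform : LinearMap.mul' ℂ B ∘ₗ mdag = ((δ : ℂ) ^ 2) • LinearMap.id)
    (A : B →ₗ[ℂ] B)
    (hSchur : ((δ : ℂ) ^ 2) • A = LinearMap.mul' ℂ B ∘ₗ TensorProduct.map A A ∘ₗ mdag)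
    (hreal : ∀ x : B, A (star x) = star (A x))
    (d : ℝ)
    (hreg1 : A 1 = (d : ℂ) • 1)
    (hreg2 : ∀ x : B, ψ (A x) = (d : ℂ) * ψ x) :
    0 ≤ d ∧ d ≤ δ ^ 2 ∧
      (d = 0 ↔ A = 0) ∧
      (d = δ ^ 2 ↔ ∀ x : B, A x = ((δ : ℂ) ^ 2 * ψ x) • 1) := by
  have hherm := psi_herm ψ hψpos
  have hψstar : ∀ z : B, ψ (star z) = conj (ψ z) := by
    intro z
    have := hherm 1 z
    rw [star_one, mul_one, one_mul] at this
    exact this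
  have hnt : (1 : B) ≠ 0 := by
    intro h
    rw [h, map_zero] at hψ1
    exact one_ne_zero hψ1.symm
  obtain ⟨hd0, hdz⟩ :=
    qg_deg_nonneg B ψ hψ1 hψpos hψfaith δ hδ mdag hmdag A hSchur hreal d hreg1
  have hSchur' := qg_compl_schur B ψ hψ1 hψpos hψfaith δ mdag hmdag A hSchur
  set A' : B →ₗ[ℂ] B := ((δ : ℂ) ^ 2) • ψ.smulRight (1 : B) - A with hA'
  have hreal' : ∀ x : B, A' (star x) = star (A' x) := by
    intro x
    simp only [hA', LinearMap.sub_apply, LinearMap.smul_apply, LinearMap.smulRight_apply]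
    rw [hreal, star_sub]
    congr 1
    rw [smul_smul, smul_smul, star_smul, star_one, Complex.star_def, map_mul]
    congr 2
    · rw [← Complex.ofReal_pow, Complex.conj_ofReal]
    · exact hψstar x
  have hreg1' : A' 1 = ((δ ^ 2 - d : ℝ) : ℂ) • 1 := by
    simp only [hA', LinearMap.sub_apply, LinearMap.smul_apply, LinearMap.smulRight_apply,
      hψ1, hreg1, one_smul]
    push_cast
    rw [sub_smul]
  obtain ⟨hd1, hdj⟩ :=
    qg_deg_nonneg B ψ hψ1 hψpos hψfaith δ hδ mdag hmdag A' hSchur' hreal'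
      (δ ^ 2 - d) hreg1'
  refine ⟨hd0, by linarith, ⟨?_, ?_⟩, ⟨?_, ?_⟩⟩
  · intro h
    exact LinearMap.ext (hdz h)
  · intro h
    rw [h] at hreg1
    simp only [LinearMap.zero_apply] at hreg1
    rcases smul_eq_zero.1 hreg1.symm with h1 | h1
    · exact_mod_cast h1
    · exact absurd h1 hnt
  · intro h x
    have h0 : δ ^ 2 - d = 0 := by rw [h]; ring
    have hx := hdj h0 x
    simp only [hA', LinearMap.sub_apply, LinearMap.smul_apply,
      LinearMap.smulRight_apply] at hx
    have := sub_eq_zero.1 hx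
    rw [smul_smul] at this
    exact this.symm
  · intro h
    have h1 : A 1 = ((δ : ℂ) ^ 2) • 1 := by rw [h 1, hψ1, mul_one]
    rw [hreg1] at h1
    have h2 : ((d : ℂ) - (δ : ℂ) ^ 2) • (1 : B) = 0 := by
      rw [sub_smul, h1, sub_self]
    rcases smul_eq_zero.1 h2 with h3 | h3
    · have h4 : (d : ℂ) = (δ : ℂ) ^ 2 := sub_eq_zero.1 h3
      exact_mod_cast h4
    · exact absurd h3 hnt
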